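/- arXiv:2106.13330 — 4 statements merged into one kernel-verified Lean document; each statement's English description precedes it below -/
import Mathlib

section
/- If G is a finite bipartite simple graph in which every vertex has degree at most d, then there is a set E₀ of edges of G such that every vertex of G is an endpoint of at most one edge of E₀, and every vertex of degree exactly d is an endpoint of exactly one edge of E₀. -/
/-!
Let `X` and `Y` be the vertices of degree `d` in `A` and outside `A`. Since all degrees are at
most `d`, a set `T` of vertices of degree `d` sends `d * #T` edges into its neighbourhood `N`,
which receives at most `d * #N` of them; this is Hall's condition, so `X` has an injective choice
of neighbours `g`, and so has `Y`, say `h`. The two are combined as in the Mendelsohn–Dulmage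
theorem: the vertices of `Y` reached from a vertex missed by `g` by alternately applying `h` and
`g` are matched by `h`, and every other vertex of `X` is matched by `g`.
-/

open Finset

namespace SimpleGraph

variable {V : Type*} {G : SimpleGraph V}

theorem exists_injOn_adj_of_degree_eq [Fintype V] [DecidableRel G.Adj] {d : ℕ} (hd : 0 < d)
    (hdeg : ∀ v, G.degree v ≤ d) {S : Set V} (hS : ∀ v ∈ S, G.degree v = d) :
    ∃ f : V → V, S.InjOn f ∧ ∀ v ∈ S, G.Adj v (f v) := by
  classical
  have hall (T : Finset S) : #T ≤ #{w | ∃ v ∈ T, G.Adj v w} := by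
    refine Nat.le_of_mul_le_mul_right (card_mul_le_card_mul (fun (v : S) w ↦ G.Adj v w) ?_ ?_) hd
    · intro v hv
      rw [← hS v v.2, ← card_neighborFinset_eq_degree]
      refine card_le_card fun w hw ↦ ?_
      rw [mem_neighborFinset] at hw
      exact mem_filter.mpr ⟨mem_filter.mpr ⟨mem_univ w, v, hv, hw⟩, hw⟩
    · intro w _
      calc #(T.bipartiteBelow (fun (v : S) w ↦ G.Adj v w) w) ≤ #(G.neighborFinset w) :=
            card_le_card_of_injOn Subtype.val
              (fun v hv ↦ by simpa [bipartiteBelow, adj_comm] using (mem_filter.mp hv).2)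
              Subtype.val_injective.injOn
        _ ≤ d := (card_neighborFinset_eq_degree G w).trans_le (hdeg w)
  obtain ⟨f, hf, hfadj⟩ :=
    (Fintype.all_card_le_filter_rel_iff_exists_injective (fun (v : S) w ↦ G.Adj v w)).mp hall
  refine ⟨fun v ↦ if hv : v ∈ S then f ⟨v, hv⟩ else v, fun v hv w hw hvw ↦ ?_, fun v hv ↦ ?_⟩
  · exact congrArg Subtype.val (hf (by simpa [hv, hw] using hvw))
  · simpa [hv] using hfadj ⟨v, hv⟩

inductive AlternatingReach (X Y : Set V) (g h : V → V) : V → Prop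
  | of_notMem_image {y : V} : y ∈ Y → y ∉ g '' X → AlternatingReach X Y g h y
  | step {y : V} : AlternatingReach X Y g h y → y ∈ Y → h y ∈ X →
      AlternatingReach X Y g h (g (h y))

theorem AlternatingReach.exists_apply_eq {X Y : Set V} {g h : V → V} (hg : X.InjOn g) {x : V}
    (hx : x ∈ X) (hr : AlternatingReach X Y g h (g x)) :
    ∃ y ∈ Y, AlternatingReach X Y g h y ∧ h y = x := by
  generalize hz : g x = z at hr
  cases hr with
  | of_notMem_image _ hz' => exact absurd ⟨x, hx, hz⟩ hz'
  | step hr hy hhy => exact ⟨_, hy, hr, (hg hx hhy hz).symm⟩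

theorem IsBipartiteWith.exists_isMatching_of_injOn {s t X Y : Set V} {g h : V → V}
    (hG : G.IsBipartiteWith s t) (hXs : X ⊆ s) (hYt : Y ⊆ t)
    (hg : X.InjOn g) (hgadj : ∀ x ∈ X, G.Adj x (g x))
    (hh : Y.InjOn h) (hhadj : ∀ y ∈ Y, G.Adj y (h y)) :
    ∃ M : G.Subgraph, M.IsMatching ∧ X ∪ Y ⊆ M.verts := by
  classical
  set R := AlternatingReach X Y g h
  have hgt (x : V) (hx : x ∈ X) : g x ∈ t := hG.mem_of_mem_adj (hXs hx) (hgadj x hx)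
  have hhs (y : V) (hy : y ∈ Y) : h y ∈ s := hG.mem_of_mem_adj' (hYt hy) (hhadj y hy).symm
  have hgh (x : V) (hx : x ∈ X) (y : V) (hy : y ∈ Y) : g x ≠ h y :=
    (hG.disjoint.ne_of_mem (hhs y hy) (hgt x hx)).symm
  have hX_notMem_t (v : V) (hv : v ∈ X) : v ∉ t := hG.disjoint.notMem_of_mem_left (hXs hv)
  have hY_notMem_s (v : V) (hv : v ∈ Y) : v ∉ s := hG.disjoint.notMem_of_mem_right (hYt hv)
  set D : Set V := {x ∈ X | ¬ R (g x)} ∪ {y ∈ Y | R y}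
  set f : V → V := s.piecewise g h
  have hfX (x : V) (hx : x ∈ X) : f x = g x := s.piecewise_eq_of_mem _ _ (hXs hx)
  have hfY (y : V) (hy : y ∈ Y) : f y = h y := s.piecewise_eq_of_notMem _ _ (hY_notMem_s y hy)
  have hfadj (u : V) (hu : u ∈ D) : G.Adj u (f u) := by
    rcases hu with ⟨hu, -⟩ | ⟨hu, -⟩
    · exact hfX u hu ▸ hgadj u hu
    · exact hfY u hu ▸ hhadj u hu
  have hfinj : D.InjOn f := by
    rintro u (⟨hu, -⟩ | ⟨hu, -⟩) w (⟨hw, -⟩ | ⟨hw, -⟩) huw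
    · exact hg hu hw (by rwa [hfX u hu, hfX w hw] at huw)
    · exact (hgh u hu w hw (by rwa [hfX u hu, hfY w hw] at huw)).elim
    · exact (hgh w hw u hu (by rwa [hfY u hu, hfX w hw, eq_comm] at huw)).elim
    · exact hh hu hw (by rwa [hfY u hu, hfY w hw] at huw)
  have hdisj : Disjoint D (f '' D) := by
    rw [Set.disjoint_left]
    rintro _ hu ⟨w, ⟨hw, hrw⟩ | ⟨hw, hrw⟩, rfl⟩
    · rw [hfX w hw] at hu
      rcases hu with ⟨hu, -⟩ | ⟨-, hr⟩
      · exact hX_notMem_t _ hu (hgt w hw)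
      · exact hrw hr
    · rw [hfY w hw] at hu
      rcases hu with ⟨hx, hr⟩ | ⟨hu, -⟩
      · exact hr (hrw.step hw hx)
      · exact hY_notMem_s _ hu (hhs w hw)
  obtain ⟨M, hMverts, hM⟩ := Subgraph.IsMatching.exists_of_disjoint_sets_of_equiv hdisj
    (hfinj.bijOn_image.equiv f) fun u ↦ hfadj u u.2
  refine ⟨M, hM, hMverts ▸ ?_⟩
  rintro v (hv | hv)
  · by_cases hr : R (g v)
    · obtain ⟨y, hy, hry, rfl⟩ := hr.exists_apply_eq hg hv
      exact Or.inr ⟨y, Or.inr ⟨hy, hry⟩, hfY y hy⟩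
    · exact Or.inl (Or.inl ⟨hv, hr⟩)
  · by_cases hr : R v
    · exact Or.inl (Or.inr ⟨hv, hr⟩)
    · obtain ⟨x, hx, rfl⟩ : v ∈ g '' X := by_contra (hr ∘ .of_notMem_image hv)
      exact Or.inr ⟨x, Or.inl ⟨hx, hr⟩, hfX x hx⟩

theorem isBipartiteWith_compl_of_adj {A : Set V} (hbip : ∀ u v, G.Adj u v → (u ∈ A ↔ v ∉ A)) :
    G.IsBipartiteWith A Aᶜ where
  disjoint := disjoint_compl_right
  mem_of_adj u v huv := by
    by_cases hu : u ∈ A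
    · exact Or.inl ⟨hu, (hbip u v huv).mp hu⟩
    · exact Or.inr ⟨hu, not_not.mp (mt (hbip u v huv).mpr hu)⟩

end SimpleGraph

/-- In a finite bipartite simple graph with all degrees at most `d`, there is a
set of edges such that every vertex is an endpoint of at most one of them and
every vertex of degree exactly `d` is an endpoint of exactly one of them. -/
theorem bipartite_partial_matching {V : Type*} [Fintype V]
    (G : SimpleGraph V) [DecidableRel G.Adj] (d : ℕ) (hd : 1 ≤ d)
    (A : Set V) (hbip : ∀ u v, G.Adj u v → (u ∈ A ↔ v ∉ A))
    (hdeg : ∀ v, G.degree v ≤ d) :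
    ∃ M : G.Subgraph, M.IsMatching ∧ ∀ v, G.degree v = d → v ∈ M.verts := by
  obtain ⟨g, hg, hgadj⟩ :=
    G.exists_injOn_adj_of_degree_eq hd hdeg (S := {v | v ∈ A ∧ G.degree v = d}) fun _ hv ↦ hv.2
  obtain ⟨h, hh, hhadj⟩ :=
    G.exists_injOn_adj_of_degree_eq hd hdeg (S := {v | v ∉ A ∧ G.degree v = d}) fun _ hv ↦ hv.2
  obtain ⟨M, hM, hcover⟩ := (G.isBipartiteWith_compl_of_adj hbip).exists_isMatching_of_injOn
    (fun _ hv ↦ hv.1) (fun _ hv ↦ hv.1) hg hgadj hh hhadj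
  refine ⟨M, hM, fun v hv ↦ hcover ?_⟩
  by_cases hvA : v ∈ A
  exacts [Or.inl ⟨hvA, hv⟩, Or.inr ⟨hvA, hv⟩]
end

section
/- Every finite bipartite simple graph with maximum degree at most d is an induced subgraph of some finite d-regular bipartite simple graph. -/
/-!
Index `2(d + 1)` disjoint copies of `G` by `(i, b) ∈ ZMod (d + 1) × Bool` and, inside the fibre
over each vertex `v`, join `(v, i, false)` to `(v, j, true)` whenever `(j - i).val < d - deg v`.
This fibre graph is `(d - deg v)`-regular, so every vertex gets degree `deg v + (d - deg v) = d`.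
Both kinds of edges flip the parity of "`v ∈ A`" xor "`b = false`", so the result is bipartite,
and fibre edges never join two vertices of one copy, so each copy of `G` is induced.
-/

open Finset

theorem ZMod.card_filter_val_lt {n k : ℕ} [NeZero n] (hk : k ≤ n) :
    #{c : ZMod n | c.val < k} = k := by
  obtain ⟨m, rfl⟩ := Nat.exists_eq_succ_of_ne_zero (NeZero.ne n)
  exact Fin.card_filter_val_lt.trans (min_eq_right hk)

namespace SimpleGraph

variable {V X : Type*}

/-- Like `G □ H`, except that the graph on the second factor may depend on the first coordinate. -/
def fiberwiseBoxProd (G : SimpleGraph V) (F : V → SimpleGraph X) : SimpleGraph (V × X) where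
  Adj p q := G.Adj p.1 q.1 ∧ p.2 = q.2 ∨ (F p.1).Adj p.2 q.2 ∧ p.1 = q.1
  symm.symm p q := by
    rintro (⟨h, e⟩ | ⟨h, e⟩)
    · exact .inl ⟨h.symm, e.symm⟩
    · exact .inr ⟨e ▸ h.symm, e.symm⟩
  loopless := ⟨fun p => by simp⟩

variable {G : SimpleGraph V} {F : V → SimpleGraph X}

@[simp]
theorem fiberwiseBoxProd_adj {p q : V × X} :
    (G.fiberwiseBoxProd F).Adj p q ↔ G.Adj p.1 q.1 ∧ p.2 = q.2 ∨ (F p.1).Adj p.2 q.2 ∧ p.1 = q.1 :=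
  Iff.rfl

variable (F) in
/-- Like `G □ H`, except that the graph on the second factor may depend on the first coordinate. -/
def fiberwiseBoxProdLeft (x : X) : G ↪g G.fiberwiseBoxProd F where
  toFun v := (v, x)
  inj' _ _ := congr_arg Prod.fst
  map_rel_iff' {u v} := show G.Adj u v ∧ x = x ∨ (F u).Adj x x ∧ u = v ↔ G.Adj u v by simp

theorem neighborFinset_fiberwiseBoxProd (v : V) (x : X) [Fintype (G.neighborSet v)]
    [Fintype ((F v).neighborSet x)] [Fintype ((G.fiberwiseBoxProd F).neighborSet (v, x))] :
    (G.fiberwiseBoxProd F).neighborFinset (v, x) =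
      (G.neighborFinset v ×ˢ {x}).disjUnion ({v} ×ˢ (F v).neighborFinset x)
        (disjoint_product.mpr <| .inl <| neighborFinset_disjoint_singleton _ _) := by
  ext ⟨u, y⟩
  simp only [mem_neighborFinset, mem_disjUnion, mem_product, mem_singleton, fiberwiseBoxProd_adj]
  grind

theorem degree_fiberwiseBoxProd (v : V) (x : X) [Fintype (G.neighborSet v)]
    [Fintype ((F v).neighborSet x)] [Fintype ((G.fiberwiseBoxProd F).neighborSet (v, x))] :
    (G.fiberwiseBoxProd F).degree (v, x) = G.degree v + (F v).degree x := by
  rw [degree, degree, degree, neighborFinset_fiberwiseBoxProd, card_disjUnion, card_product,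
    card_product, card_singleton, card_singleton, mul_one, one_mul]

theorem isRegularOfDegree_fiberwiseBoxProd [LocallyFinite G] [∀ v, LocallyFinite (F v)]
    [LocallyFinite (G.fiberwiseBoxProd F)] {k : V → ℕ} {d : ℕ}
    (hF : ∀ v, (F v).IsRegularOfDegree (k v)) (hd : ∀ v, G.degree v + k v = d) :
    (G.fiberwiseBoxProd F).IsRegularOfDegree d := by
  rintro ⟨v, x⟩
  rw [degree_fiberwiseBoxProd, (hF v).degree_eq, hd]

theorem fiberwiseBoxProd_adj_mem_iff {A : Set V} {S : Set X}
    (hG : ∀ u v, G.Adj u v → (u ∈ A ↔ v ∉ A)) (hF : ∀ v x y, (F v).Adj x y → (x ∈ S ↔ y ∉ S))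
    (p q : V × X) (h : (G.fiberwiseBoxProd F).Adj p q) :
    p ∈ {r : V × X | r.1 ∈ A ↔ r.2 ∈ S} ↔ q ∉ {r : V × X | r.1 ∈ A ↔ r.2 ∈ S} := by
  obtain ⟨hadj, e⟩ | ⟨hadj, e⟩ := fiberwiseBoxProd_adj.1 h
  · have := hG _ _ hadj
    simp only [Set.mem_ofPred_eq, e]
    tauto
  · have := hF _ _ _ hadj
    simp only [Set.mem_ofPred_eq, e]
    tauto

theorem IsRegularOfDegree.of_iso {W : Type*} {G' : SimpleGraph W} [LocallyFinite G]
    [LocallyFinite G'] {d : ℕ} (f : G ≃g G') (h : G.IsRegularOfDegree d) :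
    G'.IsRegularOfDegree d := fun w => by
  rw [← f.apply_symm_apply w, f.degree_eq]
  exact h _

def cyclicBipartite (n k : ℕ) : SimpleGraph (ZMod n × Bool) :=
  fromRel fun p q => p.2 = false ∧ q.2 = true ∧ (q.1 - p.1).val < k

theorem cyclicBipartite_adj_mem_iff {n k : ℕ} (p q : ZMod n × Bool)
    (h : (cyclicBipartite n k).Adj p q) :
    p ∈ {r : ZMod n × Bool | r.2 = false} ↔ q ∉ {r : ZMod n × Bool | r.2 = false} := by
  obtain ⟨-, ⟨hp, hq, -⟩ | ⟨hq, hp, -⟩⟩ := h <;> simp [hp, hq]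

theorem isRegularOfDegree_cyclicBipartite {n k : ℕ} [NeZero n] (hk : k ≤ n)
    [LocallyFinite (cyclicBipartite n k)] : (cyclicBipartite n k).IsRegularOfDegree k := by
  rintro ⟨i, b⟩
  have hnbr : (cyclicBipartite n k).neighborFinset (i, b) =
      ({j | (if b then i - j else j - i).val < k} : Finset (ZMod n)) ×ˢ {!b} := by
    ext ⟨j, c⟩
    rw [mem_neighborFinset]
    cases b <;> cases c <;> simp [cyclicBipartite]
  rw [← card_neighborFinset_eq_degree, hnbr, card_product, card_singleton, mul_one]
  cases b
  · exact (card_equiv (Equiv.subRight i) (by simp)).trans (ZMod.card_filter_val_lt hk)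
  · exact (card_equiv (Equiv.subLeft i) (by simp)).trans (ZMod.card_filter_val_lt hk)

end SimpleGraph

open SimpleGraph

/-- Every finite bipartite simple graph with maximum degree at most `d` is an
induced subgraph of a finite `d`-regular bipartite simple graph. -/
theorem bipartite_embeds_in_regular {V : Type*} [Fintype V]
    (G : SimpleGraph V) [DecidableRel G.Adj] (d : ℕ)
    (A : Set V) (hbip : ∀ u v, G.Adj u v → (u ∈ A ↔ v ∉ A))
    (hdeg : ∀ v, G.degree v ≤ d) :
    ∃ (W : Type) (_ : Fintype W) (H : SimpleGraph W) (_ : DecidableRel H.Adj)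
      (B : Set W),
      H.IsRegularOfDegree d ∧ (∀ u v, H.Adj u v → (u ∈ B ↔ v ∉ B)) ∧
        Nonempty (G ↪g H) := by
  classical
  let F v := cyclicBipartite (d + 1) (d - G.degree v)
  let H := G.fiberwiseBoxProd F
  let φ := Iso.map (Fintype.equivFin (V × ZMod (d + 1) × Bool)) H
  have hreg : H.IsRegularOfDegree d :=
    isRegularOfDegree_fiberwiseBoxProd (fun _ => isRegularOfDegree_cyclicBipartite (by omega))
      fun v => Nat.add_sub_cancel' (hdeg v)
  have hbipH := fiberwiseBoxProd_adj_mem_iff (F := F) hbip fun _ => cyclicBipartite_adj_mem_iff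
  refine ⟨Fin _, inferInstance, _, inferInstance,
    φ.symm ⁻¹' {p | p.1 ∈ A ↔ p.2.2 = false}, hreg.of_iso φ,
    fun u v h => hbipH _ _ (φ.symm.map_adj_iff.2 h),
    ⟨(fiberwiseBoxProdLeft _ (0, false)).trans φ.toEmbedding⟩⟩
end

section
/- If every finite subset S of the vertex set of a countable, locally finite, bipartite d-regular graph G admits a matching covering all vertices in S (i.e., a set of pairwise non-adjacent edges such that every vertex of S is an endpoint of one of them), then G admits a perfect matching. -/
/-!
Choose a neighbour `f v` of every vertex `v`. In a locally finite graph these choice functions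
form a product of finite discrete spaces, hence a compact space, in which the functions with
`f (f v) = v` for all `v ∈ s` form a closed set; for finite `s` it is nonempty, as a matching
covering `s` provides such a function. By compactness some `f` satisfies `f (f v) = v` for every
vertex, and then the edges `{v, f v}` form a perfect matching.
-/

namespace SimpleGraph

variable {V : Type*} {G : SimpleGraph V}

variable (G) in
def pairingsOn (s : Set V) : Set (∀ v, G.neighborSet v) :=
  {f | ∀ v ∈ s, (f (f v) : V) = v}

theorem pairingsOn_antitone : Antitone G.pairingsOn :=
  fun _ _ hst _ hf v hv => hf v (hst hv)

theorem pairingsOn_eq_biInter (s : Set V) : G.pairingsOn s = ⋂ v ∈ s, G.pairingsOn {v} := by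
  ext f
  simp [pairingsOn]

section Discrete

variable [TopologicalSpace V] [DiscreteTopology V] [∀ v, Finite (G.neighborSet v)]

theorem isClosed_pairingsOn_singleton (v : V) : IsClosed (G.pairingsOn {v}) := by
  have hunion : G.pairingsOn {v} =
      ⋃ w : G.neighborSet v, {f | f v = w} ∩ {f | (f w : V) = v} := by
    ext f
    simp only [pairingsOn, Set.mem_singleton_iff, forall_eq, Set.mem_iUnion, Set.mem_inter_iff,
      Set.mem_ofPred_eq]
    exact ⟨fun h => ⟨f v, rfl, h⟩, fun ⟨w, hw, h⟩ => hw ▸ h⟩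
  rw [hunion]
  refine isClosed_iUnion_of_finite fun w => IsClosed.inter ?_ ?_
  · exact (isClosed_discrete {w}).preimage (continuous_apply (A := (G.neighborSet ·)) v)
  · exact (isClosed_discrete {x : G.neighborSet w | (x : V) = v}).preimage
      (continuous_apply (A := (G.neighborSet ·)) w.1)

theorem isClosed_pairingsOn (s : Set V) : IsClosed (G.pairingsOn s) := by
  rw [pairingsOn_eq_biInter]
  exact isClosed_biInter fun v _ => isClosed_pairingsOn_singleton v

end Discrete

theorem nonempty_pairingsOn_univ [∀ v, Finite (G.neighborSet v)]
    (h : ∀ s : Finset V, (G.pairingsOn s).Nonempty) : (G.pairingsOn Set.univ).Nonempty := by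
  let _ : TopologicalSpace V := ⊥
  have : DiscreteTopology V := ⟨rfl⟩
  have : Nonempty (Finset V) := ⟨∅⟩
  have hinter : G.pairingsOn Set.univ = ⋂ s : Finset V, G.pairingsOn s := by
    ext f
    simp only [pairingsOn, Set.mem_univ, forall_const, Set.mem_iInter, Set.mem_ofPred_eq,
      Finset.mem_coe]
    exact ⟨fun h _ v _ => h v, fun h v => h {v} v (Finset.mem_singleton_self v)⟩
  rw [hinter]
  exact IsCompact.nonempty_iInter_of_directed_nonempty_isCompact_isClosed _
    (pairingsOn_antitone.comp_monotone fun _ _ => Finset.coe_subset.mpr).directed_ge h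
    (fun _ => (isClosed_pairingsOn _).isCompact) (fun _ => isClosed_pairingsOn _)

theorem Subgraph.IsMatching.nonempty_pairingsOn {M : G.Subgraph} (hM : M.IsMatching)
    {s : Set V} (hs : s ⊆ M.verts) (hne : ∀ v, (G.neighborSet v).Nonempty) :
    (G.pairingsOn s).Nonempty := by
  classical
  let f : ∀ v, G.neighborSet v := fun v =>
    if h : v ∈ M.verts then ⟨(hM h).choose, M.adj_sub (hM h).choose_spec.1⟩
    else ⟨_, (hne v).some_mem⟩
  have hf : ∀ v ∈ M.verts, M.Adj v (f v) := fun v hv => by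
    simpa [f, hv] using (hM hv).choose_spec.1
  refine ⟨f, fun v hv => ?_⟩
  have hadj := hf v (hs hv)
  exact (hM (M.edge_vert hadj.symm)).unique (hf _ (M.edge_vert hadj.symm)) hadj.symm

theorem exists_isPerfectMatching_of_involutive {p : V → V} (hadj : ∀ v, G.Adj v (p v))
    (hp : Function.Involutive p) : ∃ M : G.Subgraph, M.IsPerfectMatching := by
  let H := SimpleGraph.fromRel fun v w => p v = w
  have hHG : H ≤ G := by
    rintro v w ⟨-, rfl | rfl⟩
    exacts [hadj v, (hadj w).symm]
  refine ⟨toSubgraph H hHG, Subgraph.isPerfectMatching_iff.mpr fun v => ?_⟩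
  refine ⟨p v, ⟨(hadj v).ne, .inl rfl⟩, ?_⟩
  rintro w ⟨-, rfl | rfl⟩
  exacts [rfl, (hp w).symm]

end SimpleGraph

theorem matching_compactness_general {V : Type*}
    (G : SimpleGraph V) [G.LocallyFinite]
    (hfin : ∀ s : Finset V, ∃ M : G.Subgraph, M.IsMatching ∧ ∀ v ∈ s, v ∈ M.verts) :
    ∃ M : G.Subgraph, M.IsPerfectMatching := by
  have hne : ∀ v, (G.neighborSet v).Nonempty := fun v => by
    obtain ⟨M, hM, hv⟩ := hfin {v}
    obtain ⟨w, hw, -⟩ := hM (hv v (Finset.mem_singleton_self v))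
    exact ⟨w, M.adj_sub hw⟩
  obtain ⟨f, hf⟩ := G.nonempty_pairingsOn_univ fun s => by
    obtain ⟨M, hM, hs⟩ := hfin s
    exact hM.nonempty_pairingsOn hs hne
  exact G.exists_isPerfectMatching_of_involutive (fun v => (f v).2) fun v => hf v (Set.mem_univ v)

/-- Compactness for matchings: if every finite set of vertices of a countable,
locally finite, `d`-regular graph with no odd cycles can be covered by a
matching, then the graph has a perfect matching. -/
theorem matching_compactness {V : Type*} [Countable V]
    (G : SimpleGraph V) [G.LocallyFinite] (d : ℕ) (hd : 1 ≤ d)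
    (hreg : G.IsRegularOfDegree d)
    (hbip : ¬ ∃ (v : V) (w : G.Walk v v), w.IsCycle ∧ Odd w.length)
    (hfin : ∀ s : Finset V, ∃ M : G.Subgraph, M.IsMatching ∧ ∀ v ∈ s, v ∈ M.verts) :
    ∃ M : G.Subgraph, M.IsPerfectMatching :=
  matching_compactness_general G hfin
end

section
/- Every countable d-regular graph with no odd cycles has a perfect matching. -/
/-!
A graph without odd cycles has no closed walk of odd length (an odd closed walk that is not a
cycle splits into two shorter closed walks, one of them odd), so it is bipartite. In a `d`-regular
graph with `d ≥ 1`, counting the edges leaving a finite vertex set `S` gives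
`d * |S| ≤ d * |N(S)|`, which is Hall's condition. Hall's theorem for locally finite, possibly
infinite, bipartite graphs then yields a perfect matching.
-/

open Finset

namespace SimpleGraph

variable {V : Type*} {G : SimpleGraph V}

namespace Walk

theorem exists_isCycle_odd_length {u : V} (w : G.Walk u u) (hw : Odd w.length) :
    ∃ (v : V) (c : G.Walk v v), c.IsCycle ∧ Odd c.length := by
  induction hn : w.length using Nat.strong_induction_on generalizing u with
  | _ n ih =>
  by_cases htail : w.tail.IsPath
  · have hlen : w.length ≠ 1 := fun h ↦
      G.loopless.irrefl u (exists_length_eq_one_iff.mp ⟨w, h⟩)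
    refine ⟨u, w, isCycle_iff_isPath_tail_and_le_length.mpr ⟨htail, ?_⟩, hw⟩
    obtain ⟨k, hk⟩ := hw
    omega
  · obtain ⟨v, c, hsub, hc⟩ :
        ∃ (v : V) (c : G.Walk v v), c.IsSubwalk w.tail ∧ ¬c.Nil := by
      simpa using mt isPath_iff_isSubwalk_imp_nil.mpr htail
    have hc_pos : 0 < c.length := not_nil_iff_lt_length.mp hc
    have hc_lt : c.length < w.length := by
      have := w.length_tail_add_one (not_nil_iff_lt_length.mpr hw.pos)
      have := length_le_of_isSubwalk hsub
      omega
    -- cutting the closed subwalk `c` out of `w` leaves the closed walk `r₁.append r₂`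
    obtain ⟨r₁, r₂, hw_eq⟩ := hsub.trans (isSubwalk_rfl w).tail
    have hsplit : w.length = (r₁.append r₂).length + c.length := by
      subst hw_eq
      simp only [length_append]
      omega
    rcases Nat.even_or_odd c.length with hc_even | hc_odd
    · exact ih _ (by omega) (r₁.append r₂) (Nat.odd_add.mp (hsplit ▸ hw) |>.mpr hc_even) rfl
    · exact ih _ (by omega) c hc_odd rfl

end Walk

theorem isBipartite_iff_forall_isCycle_even :
    G.IsBipartite ↔ ∀ (v : V) (c : G.Walk v v), c.IsCycle → Even c.length := by
  rw [IsBipartite, two_colorable_iff_forall_loop_even]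
  refine ⟨fun h v c _ ↦ h v c, fun h v w ↦ ?_⟩
  by_contra hw
  obtain ⟨u, c, hc, hodd⟩ := w.exists_isCycle_odd_length (Nat.not_even_iff_odd.mp hw)
  exact Nat.not_even_iff_odd.mpr hodd (h u c hc)

theorem IsRegularOfDegree.ncard_le_ncard_iUnion_neighborSet [G.LocallyFinite] {d : ℕ}
    (hreg : G.IsRegularOfDegree d) (hd : d ≠ 0) (s : Set V) :
    s.ncard ≤ (⋃ x ∈ s, G.neighborSet x).ncard := by
  classical
  rcases s.finite_or_infinite with hs | hs
  · lift s to Finset V using hs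
    set N := s.biUnion fun x ↦ G.neighborFinset x
    have hN : (⋃ x ∈ (s : Set V), G.neighborSet x) = N := by simp [N, neighborFinset_def]
    rw [Set.ncard_coe_finset, hN, Set.ncard_coe_finset]
    refine Nat.le_of_mul_le_mul_right (?_ : #s * d ≤ #N * d) (Nat.pos_of_ne_zero hd)
    apply card_mul_le_card_mul G.Adj
    · intro a ha
      rw [← hreg.degree_eq a, ← card_neighborFinset_eq_degree]
      refine card_le_card fun b hb ↦ (mem_bipartiteAbove _).mpr ⟨?_, ?_⟩
      · exact mem_biUnion.mpr ⟨a, ha, hb⟩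
      · exact (mem_neighborFinset ..).mp hb
    · intro b _
      rw [← hreg.degree_eq b, ← card_neighborFinset_eq_degree]
      exact card_le_card fun a ha ↦
        (mem_neighborFinset ..).mpr ((mem_bipartiteBelow _).mp ha).2.symm
  · simp [hs.ncard]

end SimpleGraph

open SimpleGraph in
theorem regular_no_odd_cycle_perfect_matching_general {V : Type*}
    (G : SimpleGraph V) [G.LocallyFinite] (d : ℕ) (hd : 1 ≤ d)
    (hreg : G.IsRegularOfDegree d)
    (hbip : ¬ ∃ (v : V) (w : G.Walk v v), w.IsCycle ∧ Odd w.length) :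
    ∃ M : G.Subgraph, M.IsPerfectMatching := by
  have hG : G.IsBipartite := isBipartite_iff_forall_isCycle_even.mpr fun v c hc ↦
    Nat.not_odd_iff_even.mp fun hodd ↦ hbip ⟨v, c, hc, hodd⟩
  obtain ⟨s, t, hst⟩ := hG.exists_isBipartiteWith
  exact exists_isPerfectMatching_of_forall_ncard_le hst
    (hreg.ncard_le_ncard_iUnion_neighborSet (Nat.one_le_iff_ne_zero.mp hd))

/-- Every countable `d`-regular graph with no odd cycles has a perfect
matching. -/
theorem regular_no_odd_cycle_perfect_matching {V : Type*} [Countable V]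
    (G : SimpleGraph V) [G.LocallyFinite] (d : ℕ) (hd : 1 ≤ d)
    (hreg : G.IsRegularOfDegree d)
    (hbip : ¬ ∃ (v : V) (w : G.Walk v v), w.IsCycle ∧ Odd w.length) :
    ∃ M : G.Subgraph, M.IsPerfectMatching :=
  regular_no_odd_cycle_perfect_matching_general G d hd hreg hbip
end
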